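/- arXiv:2008.12954 — 2 statements merged into one kernel-verified Lean document; each statement's English description precedes it below -/
import Mathlib

section
/- Let σ be a permutation of a finite set of size n and let u_σ ∈ GL(n, K) be the corresponding permutation matrix over a field K. Then d_rank(u_σ, I) ≤ d_Ham(σ, id) ≤ 2·d_rank(u_σ, I), where I is the identity matrix and id the identity permutation. -/
open Matrix

/-- The permutation matrix of a permutation. -/
def permMat {n : ℕ} (K : Type*) [Zero K] [One K] (σ : Equiv.Perm (Fin n)) :
    Matrix (Fin n) (Fin n) K :=
  fun i j => if i = σ j then 1 else 0

/-- Normalized Hamming distance between permutations. -/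
noncomputable def dHam {α : Type*} (σ τ : Equiv.Perm α) : ℝ :=
  (Nat.card {x : α // σ x ≠ τ x} : ℝ) / (Nat.card α : ℝ)

/-- Normalized rank distance between square matrices. -/
noncomputable def dRank {ι : Type*} [Fintype ι] {K : Type*} [Field K]
    (u v : Matrix ι ι K) : ℝ :=
  ((u - v).rank : ℝ) / (Fintype.card ι : ℝ)

/-!
The kernel of `u_σ - 1` consists of the vectors that are constant on the cycles of `σ` (fixed
points counted as cycles of length one), so `rank (u_σ - 1) = n - c` with `c` the number of
cycles. A fixed point forms a cycle on its own and every other cycle has at least two points,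
hence `#fixed ≤ c` and `2 c ≤ n + #fixed`. With `n = #fixed + #moved` these read
`rank (u_σ - 1) ≤ #moved ≤ 2 rank (u_σ - 1)`.
-/

open Equiv Perm Finset

namespace Equiv.Perm

variable {α : Type*} {σ : Perm α}

theorem SameCycle.apply_eq_of_invariant {β : Type*} {f : α → β}
    (hf : ∀ a, f (σ a) = f a) {a b : α} (h : σ.SameCycle a b) : f a = f b := by
  obtain ⟨k, rfl⟩ := h
  suffices ∀ a, f ((σ ^ k) a) = f a from (this a).symm
  induction k using Int.induction_on with
  | zero => exact fun _ => _root_.rfl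
  | succ k ih => exact fun a => by rw [_root_.zpow_add_one, mul_apply, ih, hf]
  | pred k ih =>
    intro a
    rw [_root_.zpow_sub_one, mul_apply, ih, ← hf, ← mul_apply, mul_inv_cancel, one_apply]

variable [Fintype α] [DecidableEq α] (σ)

theorem card_compl_support_filter_sameCycle_le_one (a : α) :
    #{b ∈ σ.supportᶜ | σ.SameCycle b a} ≤ 1 := by
  refine card_le_one.2 fun b hb b' hb' => ?_
  simp only [mem_filter, mem_compl, mem_support, not_not] at hb hb'
  exact (hb.2.trans hb'.2.symm).eq_of_left hb.1

theorem two_le_card_filter_sameCycle_add (a : α) :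
    2 ≤ #{b | σ.SameCycle b a} + #{b ∈ σ.supportᶜ | σ.SameCycle b a} := by
  by_cases ha : σ a = a
  · have h₁ : 0 < #{b | σ.SameCycle b a} := card_pos.2 ⟨a, by simp [SameCycle.rfl]⟩
    have h₂ : 0 < #{b ∈ σ.supportᶜ | σ.SameCycle b a} :=
      card_pos.2 ⟨a, by simp [ha, SameCycle.rfl]⟩
    omega
  · have hpair : ({a, σ a} : Finset α) ⊆ ({b | σ.SameCycle b a} : Finset α) := by
      simp [insert_subset_iff, SameCycle.rfl, sameCycle_apply_left]
    calc 2 = #{a, σ a} := (card_pair (Ne.symm ha)).symm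
      _ ≤ #{b | σ.SameCycle b a} := card_le_card hpair
      _ ≤ _ := le_add_right le_rfl

theorem filter_mk_eq_mk_eq_filter_sameCycle [DecidableEq (Quotient (SameCycle.setoid σ))]
    (s : Finset α) (a : α) :
    {b ∈ s | Quotient.mk (SameCycle.setoid σ) b = Quotient.mk _ a} =
      {b ∈ s | σ.SameCycle b a} :=
  filter_congr fun _ _ => Quotient.eq

theorem card_compl_support_le_card_cycles :
    #σ.supportᶜ ≤ Nat.card (Quotient (SameCycle.setoid σ)) := by
  classical
  rw [Nat.card_eq_fintype_card, ← card_univ,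
    card_eq_sum_card_fiberwise (f := Quotient.mk (SameCycle.setoid σ)) (t := univ) (by simp)]
  refine (sum_le_card_nsmul _ _ 1 fun c _ => ?_).trans (by simp)
  obtain ⟨a, rfl⟩ := Quotient.mk_surjective c
  rw [filter_mk_eq_mk_eq_filter_sameCycle]
  exact card_compl_support_filter_sameCycle_le_one σ a

theorem two_mul_card_cycles_le :
    2 * Nat.card (Quotient (SameCycle.setoid σ)) ≤ Fintype.card α + #σ.supportᶜ := by
  classical
  rw [Nat.card_eq_fintype_card, ← card_univ, ← card_univ (α := α),
    card_eq_sum_card_fiberwise (f := Quotient.mk (SameCycle.setoid σ)) (t := univ) (by simp),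
    card_eq_sum_card_fiberwise (s := σ.supportᶜ) (f := Quotient.mk (SameCycle.setoid σ))
      (t := univ) (by simp),
    ← sum_add_distrib, mul_comm, ← smul_eq_mul]
  refine card_nsmul_le_sum _ _ 2 fun c _ => ?_
  obtain ⟨a, rfl⟩ := Quotient.mk_surjective c
  rw [filter_mk_eq_mk_eq_filter_sameCycle, filter_mk_eq_mk_eq_filter_sameCycle]
  exact two_le_card_filter_sameCycle_add σ a

end Equiv.Perm

section PermMat

variable {n : ℕ} (σ : Perm (Fin n))

theorem permMat_eq_permMatrix_inv (R : Type*) [Zero R] [One R] :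
    permMat R σ = σ⁻¹.permMatrix R := by
  ext i j
  simp [permMat, Perm.permMatrix, PEquiv.toMatrix_apply, Equiv.eq_symm_apply, eq_comm]

variable {R : Type*} [CommRing R]

theorem permMat_mulVec (x : Fin n → R) : permMat R σ *ᵥ x = x ∘ ⇑σ⁻¹ := by
  rw [permMat_eq_permMatrix_inv, permMatrix_mulVec]

theorem permMat_sub_one_mulVec_eq_zero_iff (x : Fin n → R) :
    (permMat R σ - 1) *ᵥ x = 0 ↔ ∀ i, x (σ i) = x i := by
  rw [sub_mulVec, one_mulVec, permMat_mulVec, sub_eq_zero, (σ⁻¹).surjective.forall]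
  simp [funext_iff, eq_comm]

theorem ker_permMat_sub_one :
    LinearMap.ker (permMat R σ - 1).mulVecLin =
      LinearMap.range (LinearMap.funLeft R R (Quotient.mk (SameCycle.setoid σ))) := by
  ext x
  rw [LinearMap.mem_ker, mulVecLin_apply, permMat_sub_one_mulVec_eq_zero_iff]
  constructor
  · intro hx
    exact ⟨Quotient.lift x fun _ _ => SameCycle.apply_eq_of_invariant hx, rfl⟩
  · rintro ⟨y, rfl⟩ i
    exact congrArg y (Quotient.sound (sameCycle_apply_left.2 SameCycle.rfl))

theorem rank_permMat_sub_one_add_card_cycles (K : Type*) [Field K] :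
    (permMat K σ - 1).rank + Nat.card (Quotient (SameCycle.setoid σ)) = n := by
  classical
  have hker : Module.finrank K (LinearMap.ker (permMat K σ - 1).mulVecLin) =
      Nat.card (Quotient (SameCycle.setoid σ)) := by
    rw [ker_permMat_sub_one, LinearMap.finrank_range_of_inj
      (LinearMap.funLeft_injective_of_surjective _ _ _ Quotient.mk_surjective),
      Module.finrank_fintype_fun_eq_card, Nat.card_eq_fintype_card]
  rw [Matrix.rank, ← hker, LinearMap.finrank_range_add_finrank_ker,
    Module.finrank_fintype_fun_eq_card, Fintype.card_fin]

end PermMat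

/-- `d_rank(u_σ, I) ≤ d_Ham(σ, id) ≤ 2·d_rank(u_σ, I)`. -/
theorem dRank_le_dHam_le_two_dRank {n : ℕ} (K : Type*) [Field K]
    (σ : Equiv.Perm (Fin n)) :
    dRank (permMat K σ) 1 ≤ dHam σ 1 ∧ dHam σ 1 ≤ 2 * dRank (permMat K σ) 1 := by
  have hrank := rank_permMat_sub_one_add_card_cycles σ K
  have hfixed := card_compl_support_le_card_cycles σ
  have hpairs := two_mul_card_cycles_le σ
  have hsplit := card_add_card_compl σ.support
  rw [Fintype.card_fin] at hpairs hsplit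
  have hHam : dHam σ 1 = (#σ.support : ℝ) / n := by
    rw [dHam, Nat.card_eq_fintype_card, Fintype.card_subtype, Nat.card_fin]
    rfl
  have hRank : dRank (permMat K σ) 1 = ((permMat K σ - 1).rank : ℝ) / n := by
    rw [dRank, Fintype.card_fin]
  rw [hHam, hRank, ← mul_div_assoc]
  constructor <;> gcongr <;> norm_cast <;> omega
end

section
/- Let G be a group, (H, d) a compact group with bi-invariant metric, ε > 0, and (Fₙ) an increasing sequence of finite subsets of G with union G. Suppose for each n there is φₙ : G → H with d(φₙ(g)φₙ(h), φₙ(gh)) < 1/n for g, h, gh ∈ Fₙ and d(φₙ(g), φₙ(h)) ≥ ε − 1/n for distinct g, h ∈ Fₙ. Then there exists an injective group homomorphism φ : G → H. -/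
open Filter Topology

/-- a group admitting, on an exhausting sequence of finite sets,
almost-multiplicative and uniformly `ε`-separated maps into a fixed compact group
with bi-invariant metric, embeds into that group. -/
theorem embeds_of_approximations {G H : Type*} [Group G] [Group H]
    [MetricSpace H] [CompactSpace H]
    (hleft : ∀ k g h : H, dist (k * g) (k * h) = dist g h)
    (hright : ∀ k g h : H, dist (g * k) (h * k) = dist g h)
    (ε : ℝ) (hε : 0 < ε)
    (F : ℕ → Finset G) (hmono : Monotone F) (hexh : ∀ g : G, ∃ n, g ∈ F n)
    (φ : ℕ → G → H)
    (hmul : ∀ n : ℕ, 0 < n → ∀ g ∈ F n, ∀ h ∈ F n, g * h ∈ F n →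
      dist (φ n g * φ n h) (φ n (g * h)) < 1 / (n : ℝ))
    (hsep : ∀ n : ℕ, 0 < n → ∀ g ∈ F n, ∀ h ∈ F n, g ≠ h →
      ε - 1 / (n : ℝ) ≤ dist (φ n g) (φ n h)) :
    ∃ ψ : G →* H, Function.Injective ψ := by
  obtain ⟨U, hU⟩ : ∃ U : Ultrafilter ℕ, ↑U ≤ (atTop : Filter ℕ) :=
    ⟨Ultrafilter.of atTop, Ultrafilter.of_le _⟩
  have key : ∀ g : G, ∃ x : H, Tendsto (fun n => φ n g) (U : Filter ℕ) (𝓝 x) := by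
    intro g
    rcases isCompact_univ.ultrafilter_le_nhds (U.map (fun n => φ n g)) (by simp) with
      ⟨x, -, hx⟩
    exact ⟨x, hx⟩
  choose ψ hψ using key
  -- continuity of multiplication from bi-invariance
  have hmulconv : ∀ {u v : ℕ → H} {a b : H}, Tendsto u (U : Filter ℕ) (𝓝 a) →
      Tendsto v (U : Filter ℕ) (𝓝 b) →
      Tendsto (fun n => u n * v n) (U : Filter ℕ) (𝓝 (a * b)) := by
    intro u v a b hu hv
    rw [tendsto_iff_dist_tendsto_zero] at hu hv ⊢
    have h1 : Tendsto (fun n => dist (u n) a + dist (v n) b) (U : Filter ℕ) (𝓝 0) := by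
      simpa using hu.add hv
    refine squeeze_zero (fun n => dist_nonneg) (fun n => ?_) h1
    calc dist (u n * v n) (a * b)
        ≤ dist (u n * v n) (a * v n) + dist (a * v n) (a * b) := dist_triangle _ _ _
      _ = dist (u n) a + dist (v n) b := by rw [hright, hleft]
  have hev : ∀ g : G, ∀ᶠ n in (U : Filter ℕ), g ∈ F n := by
    intro g
    obtain ⟨N, hN⟩ := hexh g
    exact ((eventually_ge_atTop N).mono fun n hn => hmono hn hN).filter_mono hU
  have hinv : Tendsto (fun n : ℕ => 1 / (n : ℝ)) (U : Filter ℕ) (𝓝 0) :=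
    tendsto_one_div_atTop_nhds_zero_nat.mono_left hU
  have hpos : ∀ᶠ n in (U : Filter ℕ), 0 < n :=
    (eventually_gt_atTop 0).filter_mono hU
  have hmapmul : ∀ g h : G, ψ g * ψ h = ψ (g * h) := by
    intro g h
    have h1 : Tendsto (fun n => dist (φ n g * φ n h) (φ n (g * h))) (U : Filter ℕ)
        (𝓝 (dist (ψ g * ψ h) (ψ (g * h)))) :=
      (hmulconv (hψ g) (hψ h)).dist (hψ (g * h))
    have hle : dist (ψ g * ψ h) (ψ (g * h)) ≤ 0 := by
      refine le_of_tendsto_of_tendsto h1 hinv ?_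
      filter_upwards [hev g, hev h, hev (g * h), hpos] with n hg hh hgh hn
      exact (hmul n hn g hg h hh hgh).le
    exact dist_le_zero.mp hle
  refine ⟨MonoidHom.mk' ψ (fun g h => (hmapmul g h).symm), ?_⟩
  intro g h heq
  by_contra hne
  have h1 : Tendsto (fun n => dist (φ n g) (φ n h)) (U : Filter ℕ)
      (𝓝 (dist (ψ g) (ψ h))) := (hψ g).dist (hψ h)
  have h2 : Tendsto (fun n : ℕ => ε - 1 / (n : ℝ)) (U : Filter ℕ) (𝓝 ε) := by
    simpa using (tendsto_const_nhds (x := ε) (f := (U : Filter ℕ))).sub hinv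
  have hle : ε ≤ dist (ψ g) (ψ h) := by
    refine le_of_tendsto_of_tendsto h2 h1 ?_
    filter_upwards [hev g, hev h, hpos] with n hg hh hn
    exact hsep n hn g hg h hh hne
  have heq' : ψ g = ψ h := heq
  rw [dist_eq_zero.mpr heq'] at hle
  exact absurd (hε.trans_le hle) (lt_irrefl 0)
end
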